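/- Let f : S → E be a strictly increasing function from a set S of epsilon numbers into the epsilon numbers, and let x, y be ordinals with Ep(x) ∪ Ep(y) ⊆ S. Then Ep(x · y) ⊆ S and (x · y)[f] = x[f] · y[f]. -/

import Mathlib

open Ordinal

/-- An ordinal is an epsilon number if it is a fixed point of `ω ^ ·`. -/
def IsEpsilon (x : Ordinal.{0}) : Prop := ω ^ x = x

theorem cnf_fst_lt {x : Ordinal.{0}} (h : ¬ ω ^ x = x) {p : Ordinal × Ordinal}
    (hp : p ∈ CNF ω x) : p.1 < x := by
  have hx : x ≠ 0 := by
    rintro rfl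
    simp [Ordinal.CNF.zero_right] at hp
  have h1 : p.1 ≤ Ordinal.log ω x := Ordinal.CNF.fst_le_log hp
  have h2 : Ordinal.log ω x < x := by
    rcases lt_or_eq_of_le (Ordinal.log_le_self ω x) with h' | h'
    · exact h'
    · exfalso
      have hle := Ordinal.opow_log_le_self ω hx
      rw [h'] at hle
      exact h (le_antisymm hle (Ordinal.right_le_opow x one_lt_omega0))
  exact lt_of_le_of_lt h1 h2

open scoped Classical in
/-- The set of epsilon numbers occurring hereditarily in the Cantor normal form of `x`. -/
noncomputable def Ep (x : Ordinal.{0}) : Set Ordinal.{0} :=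
  if h : ω ^ x = x then {x}
  else ⋃ p : {q // q ∈ CNF ω x}, Ep p.1.1
termination_by x
decreasing_by exact cnf_fst_lt h p.2

open scoped Classical in
/-- Simultaneous substitution of the epsilon numbers occurring hereditarily in the
Cantor normal form of `x` by their values under `f`. -/
noncomputable def subst (f : Ordinal.{0} → Ordinal.{0}) (x : Ordinal.{0}) : Ordinal.{0} :=
  if h : ω ^ x = x then f x
  else (((CNF ω x).attach).map (fun p => ω ^ subst f p.1.1 * p.1.2)).sum
termination_by x
decreasing_by exact cnf_fst_lt h p.2

/-!
Every nonzero ordinal is `ω ^ a * c + r` with `0 < c < ω` and `r < ω ^ a`, and both `Ep` and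
`subst f` commute with this decomposition; for `subst f` this holds also at an epsilon number
`e = ω ^ e * 1 + 0` because `f e` is again an epsilon number. Since `f` is strictly monotone,
so is `subst f` on the ordinals `z` with `Ep z ⊆ S`; in particular it preserves `r < ω ^ a`,
so it maps normal forms to normal forms. Sums and products of normal forms are computed from
exponents and coefficients alone (absorption `u + v = v` for `u < ω ^ log v`, and
`(ω ^ a * c + r) * ω ^ b = ω ^ (a + b)` for `b ≠ 0`), so `subst f` commutes with them.
-/

open Set

section Arithmetic

variable {a b c d r t : Ordinal.{0}}

theorem exists_eq_opow_mul_add {z : Ordinal.{0}} (hz : z ≠ 0) :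
    ∃ a c r : Ordinal.{0}, c ≠ 0 ∧ c < ω ∧ r < ω ^ a ∧ z = ω ^ a * c + r :=
  ⟨Ordinal.log ω z, z / ω ^ Ordinal.log ω z, z % ω ^ Ordinal.log ω z,
    (div_opow_log_pos ω hz).ne', div_opow_log_lt z one_lt_omega0,
    mod_lt z (opow_ne_zero _ omega0_ne_zero), (div_add_mod z _).symm⟩

theorem opow_le_opow_mul_add (hc : c ≠ 0) : ω ^ a ≤ ω ^ a * c + r :=
  (le_mul_left _ (pos_iff_ne_zero.2 hc)).trans le_self_add

theorem lt_opow_mul_add (hc : c ≠ 0) (hr : r < ω ^ a) : r < ω ^ a * c + r :=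
  hr.trans_le (opow_le_opow_mul_add hc)

theorem lt_opow_mul_add_of_not_isEpsilon (hc : c ≠ 0) (h : ¬IsEpsilon (ω ^ a * c + r)) :
    a < ω ^ a * c + r := by
  have ha : a ≤ ω ^ a := right_le_opow a one_lt_omega0
  refine (ha.trans (opow_le_opow_mul_add hc)).lt_of_ne fun hEq => h ?_
  rw [IsEpsilon, ← hEq]
  exact le_antisymm ((opow_le_opow_mul_add hc).trans_eq hEq.symm) ha

theorem IsEpsilon.omega0_le {e : Ordinal.{0}} (he : IsEpsilon e) : ω ≤ e := by
  have he0 : e ≠ 0 := by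
    rintro rfl
    exact one_ne_zero ((opow_zero ω).symm.trans he)
  exact he ▸ left_le_opow ω (pos_iff_ne_zero.2 he0)

theorem not_isEpsilon_of_lt_omega0 {z : Ordinal.{0}} (hz : z < ω) : ¬IsEpsilon z :=
  fun he => he.omega0_le.not_gt hz

theorem IsEpsilon.opow_mul_add_lt {e : Ordinal.{0}} (he : IsEpsilon e) (ha : a < e)
    (hc : c < ω) (hr : r < e) : ω ^ a * c + r < e := by
  rw [← he] at hr ⊢
  exact isPrincipal_add_omega0_opow e (opow_mul_lt_opow hc ha) hr

theorem opow_mul_add_lt_opow_mul_add (hr : r < ω ^ a) (hc : c < ω) (hd : d ≠ 0)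
    (h : a < b ∨ a = b ∧ (c < d ∨ c = d ∧ r < t)) : ω ^ a * c + r < ω ^ b * d + t := by
  rcases h with hab | ⟨rfl, hcd | ⟨rfl, hrt⟩⟩
  · exact (opow_mul_add_lt_opow hc hr hab).trans_le (opow_le_opow_mul_add hd)
  · exact (opow_mul_add_lt_opow_mul hr hcd).trans_le le_self_add
  · exact add_lt_add_right hrt _

theorem opow_mul_add_lt_opow_mul_add_iff (hr : r < ω ^ a) (hc0 : c ≠ 0) (hc : c < ω)
    (ht : t < ω ^ b) (hd0 : d ≠ 0) (hd : d < ω) :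
    ω ^ a * c + r < ω ^ b * d + t ↔ a < b ∨ a = b ∧ (c < d ∨ c = d ∧ r < t) := by
  refine ⟨fun h => ?_, opow_mul_add_lt_opow_mul_add hr hc hd0⟩
  have not_gt := fun h' => (opow_mul_add_lt_opow_mul_add ht hd hc0 h').not_gt h
  rcases lt_trichotomy a b with hab | rfl | hab
  · exact Or.inl hab
  · rcases lt_trichotomy c d with hcd | rfl | hcd
    · exact Or.inr ⟨rfl, Or.inl hcd⟩
    · exact Or.inr ⟨rfl, Or.inr ⟨rfl, (add_lt_add_iff_left _).1 h⟩⟩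
    · exact (not_gt (Or.inr ⟨rfl, Or.inl hcd⟩)).elim
  · exact (not_gt (Or.inl hab)).elim

theorem opow_mul_add_add_of_lt (hab : a < b) (hr : r < ω ^ a) (hc : c < ω) (hd : d ≠ 0) :
    ω ^ a * c + r + (ω ^ b * d + t) = ω ^ b * d + t :=
  add_of_omega0_opow_le (opow_mul_add_lt_opow hc hr hab) (opow_le_opow_mul_add hd)

theorem opow_mul_add_add_opow_mul_add (hr : r < ω ^ a) (hd : d ≠ 0) :
    ω ^ a * c + r + (ω ^ a * d + t) = ω ^ a * (c + d) + t := by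
  rw [add_assoc, add_of_omega0_opow_le hr (opow_le_opow_mul_add hd), ← add_assoc, ← mul_add]

theorem opow_mul_add_mul_of_lt_omega0 (hr : r < ω ^ a) (hc : c ≠ 0) {n : Ordinal.{0}}
    (hn0 : n ≠ 0) (hn : n < ω) : (ω ^ a * c + r) * n = ω ^ a * (c * n) + r := by
  obtain ⟨m, rfl⟩ := lt_omega0.1 hn
  obtain ⟨m, rfl⟩ := Nat.exists_eq_add_one_of_ne_zero (by exact_mod_cast hn0)
  clear hn0 hn
  induction m with
  | zero => simp
  | succ m ih =>
    rw [Nat.cast_succ, mul_add_one, ih, opow_mul_add_add_opow_mul_add hr hc, ← mul_add_one]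

theorem opow_mul_add_mul_omega0 (hr : r < ω ^ a) (hc0 : c ≠ 0) (hc : c < ω) :
    (ω ^ a * c + r) * ω = ω ^ (a + 1) := by
  rw [opow_add, opow_one]
  apply le_antisymm
  · have hsucc : Order.succ c * ω = ω :=
      mul_omega0 ((pos_iff_ne_zero.2 hc0).trans_le (Order.le_succ c))
        (isSuccLimit_omega0.succ_lt hc)
    calc (ω ^ a * c + r) * ω ≤ ω ^ a * Order.succ c * ω :=
          mul_le_mul_left (opow_mul_add_lt_opow_mul hr (Order.lt_succ c)).le ω
      _ = ω ^ a * ω := by rw [mul_assoc, hsucc]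
  · exact mul_le_mul_left (opow_le_opow_mul_add hc0) ω

theorem opow_mul_add_mul_opow (hr : r < ω ^ a) (hc0 : c ≠ 0) (hc : c < ω) (hb : b ≠ 0) :
    (ω ^ a * c + r) * ω ^ b = ω ^ (a + b) := by
  obtain ⟨b, rfl⟩ : ∃ b', b = 1 + b' :=
    ⟨b - 1, (Ordinal.add_sub_cancel_of_le (Order.one_le_iff_ne_zero.2 hb)).symm⟩
  rw [opow_add, opow_one, ← mul_assoc, opow_mul_add_mul_omega0 hr hc0 hc, ← opow_add, add_assoc]

theorem opow_mul_add_mul_lt_opow_add (hr : r < ω ^ a) (hc0 : c ≠ 0) (hc : c < ω) (hb : b ≠ 0)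
    (ht : t < ω ^ b) : (ω ^ a * c + r) * t < ω ^ (a + b) := by
  rw [← opow_mul_add_mul_opow hr hc0 hc hb]
  exact mul_lt_mul_of_pos_left ht (opow_mul_add_pos omega0_ne_zero a hc0 r)

theorem opow_mul_add_mul_opow_mul_add (hr : r < ω ^ a) (hc0 : c ≠ 0) (hc : c < ω)
    (hb : b ≠ 0) :
    (ω ^ a * c + r) * (ω ^ b * d + t) = ω ^ (a + b) * d + (ω ^ a * c + r) * t := by
  rw [mul_add, ← mul_assoc, opow_mul_add_mul_opow hr hc0 hc hb]

end Arithmetic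

section CantorNormalForm

variable {a c r z : Ordinal.{0}}

theorem CNF_of_isEpsilon {e : Ordinal.{0}} (he : IsEpsilon e) : CNF ω e = [(e, 1)] := by
  have h := CNF.opow_mul_add one_lt_omega0 one_ne_zero one_lt_omega0 (opow_pos e omega0_pos)
    (e := e) (y := 0)
  rwa [mul_one, add_zero, he, CNF.zero_right] at h

theorem Ep_of_isEpsilon {e : Ordinal.{0}} (he : IsEpsilon e) : Ep e = {e} := by
  rw [Ep, dif_pos (show ω ^ e = e from he)]

theorem Ep_eq_biUnion (z : Ordinal.{0}) : Ep z = ⋃ p ∈ CNF ω z, Ep p.1 := by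
  by_cases h : IsEpsilon z
  · simp [Ep_of_isEpsilon h, CNF_of_isEpsilon h]
  · rw [Ep, dif_neg (show ¬ω ^ z = z from h), iUnion_subtype]

theorem Ep_zero : Ep 0 = ∅ := by
  simp [Ep_eq_biUnion 0]

theorem Ep_opow_mul_add (hc0 : c ≠ 0) (hc : c < ω) (hr : r < ω ^ a) :
    Ep (ω ^ a * c + r) = Ep a ∪ Ep r := by
  rw [Ep_eq_biUnion, CNF.opow_mul_add one_lt_omega0 hc0 hc hr, Ep_eq_biUnion r]
  simp

theorem Ep_opow (a : Ordinal.{0}) : Ep (ω ^ a) = Ep a := by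
  simpa [Ep_zero] using
    Ep_opow_mul_add one_ne_zero one_lt_omega0 (opow_pos a omega0_pos) (r := 0)

theorem mem_of_Ep_subset {S : Set Ordinal.{0}} (hz : Ep z ⊆ S) (h : IsEpsilon z) : z ∈ S :=
  hz (by rw [Ep_of_isEpsilon h]; rfl)

theorem Ep_add_subset (u v : Ordinal.{0}) : Ep (u + v) ⊆ Ep u ∪ Ep v := by
  induction u using WellFoundedLT.induction with
  | _ u ih =>
  rcases eq_or_ne u 0 with rfl | hu0
  · simp [Ep_zero]
  rcases eq_or_ne v 0 with rfl | hv0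
  · simp
  obtain ⟨a, c, r, hc0, hc, hr, rfl⟩ := exists_eq_opow_mul_add hu0
  obtain ⟨b, d, t, hd0, hd, ht, rfl⟩ := exists_eq_opow_mul_add hv0
  rcases lt_trichotomy a b with hab | rfl | hab
  · rw [opow_mul_add_add_of_lt hab hr hc hd0]
    exact subset_union_right
  · rw [opow_mul_add_add_opow_mul_add hr hd0,
      Ep_opow_mul_add (by simp [hc0]) (isPrincipal_add_omega0 hc hd) ht,
      Ep_opow_mul_add hd0 hd ht]
    exact subset_union_right
  · have hrv := isPrincipal_add_omega0_opow a hr (opow_mul_add_lt_opow hd ht hab)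
    rw [add_assoc, Ep_opow_mul_add hc0 hc hrv, Ep_opow_mul_add hc0 hc hr, union_assoc]
    exact union_subset_union_right _ (ih r (lt_opow_mul_add hc0 hr))

theorem Ep_mul_subset (x y : Ordinal.{0}) : Ep (x * y) ⊆ Ep x ∪ Ep y := by
  induction y using WellFoundedLT.induction with
  | _ y ih =>
  rcases eq_or_ne x 0 with rfl | hx0
  · simp [Ep_zero]
  rcases eq_or_ne y 0 with rfl | hy0
  · simp [Ep_zero]
  obtain ⟨a, c, r, hc0, hc, hr, rfl⟩ := exists_eq_opow_mul_add hx0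
  rw [Ep_opow_mul_add hc0 hc hr]
  rcases lt_or_ge y ω with hyω | hωy
  · rw [opow_mul_add_mul_of_lt_omega0 hr hc0 hy0 hyω,
      Ep_opow_mul_add (mul_ne_zero hc0 hy0) (isPrincipal_mul_omega0 hc hyω) hr]
    exact subset_union_left
  obtain ⟨b, d, t, hd0, hd, ht, rfl⟩ := exists_eq_opow_mul_add hy0
  have hb0 : b ≠ 0 := by
    rintro rfl
    exact hωy.not_gt (by simpa using opow_mul_add_lt_opow hd ht zero_lt_one)
  rw [opow_mul_add_mul_opow_mul_add hr hc0 hc hb0,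
    Ep_opow_mul_add hd0 hd (opow_mul_add_mul_lt_opow_add hr hc0 hc hb0 ht),
    Ep_opow_mul_add hd0 hd ht]
  have hxt := ih t (lt_opow_mul_add hd0 ht)
  rw [Ep_opow_mul_add hc0 hc hr] at hxt
  refine union_subset ((Ep_add_subset a b).trans ?_) (hxt.trans ?_)
  · exact union_subset_union subset_union_left subset_union_left
  · exact union_subset_union_right _ subset_union_right

variable (f : Ordinal.{0} → Ordinal.{0})

theorem subst_of_isEpsilon {e : Ordinal.{0}} (he : IsEpsilon e) : subst f e = f e := by
  rw [subst, dif_pos (show ω ^ e = e from he)]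

theorem subst_of_not_isEpsilon (h : ¬IsEpsilon z) :
    subst f z = ((CNF ω z).map fun p => ω ^ subst f p.1 * p.2).sum := by
  rw [subst, dif_neg (show ¬ω ^ z = z from h),
    List.attach_map_val (l := CNF ω z) (f := fun q => ω ^ subst f q.1 * q.2)]

theorem subst_zero : subst f 0 = 0 := by
  rw [subst_of_not_isEpsilon f (not_isEpsilon_of_lt_omega0 omega0_pos), CNF.zero_right]
  rfl

theorem subst_of_lt_omega0 (hz : z < ω) : subst f z = z := by
  rcases eq_or_ne z 0 with rfl | hz0
  · exact subst_zero f
  · simp [subst_of_not_isEpsilon f (not_isEpsilon_of_lt_omega0 hz), CNF.of_lt hz0 hz,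
      subst_zero]

end CantorNormalForm

section Substitution

variable {S : Set Ordinal.{0}} {f : Ordinal.{0} → Ordinal.{0}} {a c r z : Ordinal.{0}}

theorem subst_eq_sum (hfE : ∀ e ∈ S, IsEpsilon (f e)) (hz : Ep z ⊆ S) :
    subst f z = ((CNF ω z).map fun p => ω ^ subst f p.1 * p.2).sum := by
  by_cases h : IsEpsilon z
  · simp only [CNF_of_isEpsilon h, List.map_cons, List.map_nil, List.sum_cons, List.sum_nil,
      mul_one, add_zero, subst_of_isEpsilon f h]
    exact (hfE z (mem_of_Ep_subset hz h)).symm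
  · exact subst_of_not_isEpsilon f h

theorem subst_opow_mul_add (hfE : ∀ e ∈ S, IsEpsilon (f e)) (hc0 : c ≠ 0) (hc : c < ω)
    (hr : r < ω ^ a) (haS : Ep a ⊆ S) (hrS : Ep r ⊆ S) :
    subst f (ω ^ a * c + r) = ω ^ subst f a * c + subst f r := by
  have hz : Ep (ω ^ a * c + r) ⊆ S := by
    rw [Ep_opow_mul_add hc0 hc hr]
    exact union_subset haS hrS
  rw [subst_eq_sum hfE hz, CNF.opow_mul_add one_lt_omega0 hc0 hc hr, List.map_cons,
    List.sum_cons, ← subst_eq_sum hfE hrS]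

theorem subst_opow (hfE : ∀ e ∈ S, IsEpsilon (f e)) (haS : Ep a ⊆ S) :
    subst f (ω ^ a) = ω ^ subst f a := by
  simpa [subst_zero] using subst_opow_mul_add hfE one_ne_zero one_lt_omega0
    (opow_pos a omega0_pos) haS (by rw [Ep_zero]; exact empty_subset S)

theorem subst_pos (hfE : ∀ e ∈ S, IsEpsilon (f e)) (hz0 : z ≠ 0) (hz : Ep z ⊆ S) :
    0 < subst f z := by
  obtain ⟨a, c, r, hc0, hc, hr, rfl⟩ := exists_eq_opow_mul_add hz0
  rw [Ep_opow_mul_add hc0 hc hr, union_subset_iff] at hz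
  rw [subst_opow_mul_add hfE hc0 hc hr hz.1 hz.2]
  exact opow_mul_add_pos omega0_ne_zero _ hc0 _

theorem subst_lt_of_lt_of_mem (hfE : ∀ e ∈ S, IsEpsilon (f e)) (hf : StrictMonoOn f S)
    {e : Ordinal.{0}} (he : e ∈ S) (hz : Ep z ⊆ S) (hze : z < e) : subst f z < f e := by
  induction z using WellFoundedLT.induction with
  | _ z ih =>
  by_cases hzε : IsEpsilon z
  · rw [subst_of_isEpsilon f hzε]
    exact hf (mem_of_Ep_subset hz hzε) he hze
  rcases eq_or_ne z 0 with rfl | hz0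
  · rw [subst_zero]
    exact omega0_pos.trans_le (hfE e he).omega0_le
  obtain ⟨a, c, r, hc0, hc, hr, rfl⟩ := exists_eq_opow_mul_add hz0
  have ha := lt_opow_mul_add_of_not_isEpsilon hc0 hzε
  have hr' := lt_opow_mul_add hc0 hr
  rw [Ep_opow_mul_add hc0 hc hr, union_subset_iff] at hz
  rw [subst_opow_mul_add hfE hc0 hc hr hz.1 hz.2]
  exact (hfE e he).opow_mul_add_lt (ih a ha hz.1 (ha.trans hze)) hc
    (ih r hr' hz.2 (hr'.trans hze))

theorem subst_strictMonoOn (hfE : ∀ e ∈ S, IsEpsilon (f e)) (hf : StrictMonoOn f S) :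
    StrictMonoOn (subst f) {z | Ep z ⊆ S} := by
  rintro x (hx : Ep x ⊆ S) y (hy : Ep y ⊆ S) hxy
  induction y using WellFoundedLT.induction generalizing x with
  | _ y ih =>
  by_cases hyε : IsEpsilon y
  · rw [subst_of_isEpsilon f hyε]
    exact subst_lt_of_lt_of_mem hfE hf (mem_of_Ep_subset hy hyε) hx hxy
  have hy0 : y ≠ 0 := (zero_le.trans_lt hxy).ne'
  rcases eq_or_ne x 0 with rfl | hx0
  · rw [subst_zero]
    exact subst_pos hfE hy0 hy
  obtain ⟨b, d, t, hd0, hd, ht, rfl⟩ := exists_eq_opow_mul_add hy0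
  obtain ⟨a, c, r, hc0, hc, hr, rfl⟩ := exists_eq_opow_mul_add hx0
  have hb := lt_opow_mul_add_of_not_isEpsilon hd0 hyε
  have ht' := lt_opow_mul_add hd0 ht
  rw [Ep_opow_mul_add hd0 hd ht, union_subset_iff] at hy
  rw [Ep_opow_mul_add hc0 hc hr, union_subset_iff] at hx
  have hsr : subst f r < ω ^ subst f a := by
    rw [← subst_opow hfE hx.1]
    exact ih _ ((opow_le_opow_mul_add hc0).trans_lt hxy) hx.2 ((Ep_opow a).trans_subset hx.1) hr
  rw [subst_opow_mul_add hfE hc0 hc hr hx.1 hx.2, subst_opow_mul_add hfE hd0 hd ht hy.1 hy.2]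
  refine opow_mul_add_lt_opow_mul_add hsr hc hd0 ?_
  rcases (opow_mul_add_lt_opow_mul_add_iff hr hc0 hc ht hd0 hd).1 hxy with
    hab | ⟨rfl, hcd | ⟨rfl, hrt⟩⟩
  · exact Or.inl (ih b hb hx.1 hy.1 hab)
  · exact Or.inr ⟨rfl, Or.inl hcd⟩
  · exact Or.inr ⟨rfl, Or.inr ⟨rfl, ih t ht' hx.2 hy.2 hrt⟩⟩

theorem subst_lt_opow_subst (hfE : ∀ e ∈ S, IsEpsilon (f e)) (hf : StrictMonoOn f S)
    (hr : r < ω ^ a) (haS : Ep a ⊆ S) (hrS : Ep r ⊆ S) : subst f r < ω ^ subst f a := by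
  rw [← subst_opow hfE haS]
  exact subst_strictMonoOn hfE hf hrS ((Ep_opow a).trans_subset haS) hr

theorem subst_add (hfE : ∀ e ∈ S, IsEpsilon (f e)) (hf : StrictMonoOn f S) {u v : Ordinal.{0}}
    (hu : Ep u ⊆ S) (hv : Ep v ⊆ S) : subst f (u + v) = subst f u + subst f v := by
  induction u using WellFoundedLT.induction with
  | _ u ih =>
  rcases eq_or_ne u 0 with rfl | hu0
  · rw [zero_add, subst_zero, zero_add]
  rcases eq_or_ne v 0 with rfl | hv0
  · rw [add_zero, subst_zero, add_zero]
  obtain ⟨a, c, r, hc0, hc, hr, rfl⟩ := exists_eq_opow_mul_add hu0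
  rw [Ep_opow_mul_add hc0 hc hr, union_subset_iff] at hu
  have hsr := subst_lt_opow_subst hfE hf hr hu.1 hu.2
  rw [subst_opow_mul_add hfE hc0 hc hr hu.1 hu.2]
  obtain ⟨b, d, t, hd0, hd, ht, rfl⟩ := exists_eq_opow_mul_add hv0
  rcases lt_trichotomy a b with hab | rfl | hab
  · rw [Ep_opow_mul_add hd0 hd ht, union_subset_iff] at hv
    rw [opow_mul_add_add_of_lt hab hr hc hd0, subst_opow_mul_add hfE hd0 hd ht hv.1 hv.2,
      opow_mul_add_add_of_lt (subst_strictMonoOn hfE hf hu.1 hv.1 hab) hsr hc hd0]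
  · rw [Ep_opow_mul_add hd0 hd ht, union_subset_iff] at hv
    rw [opow_mul_add_add_opow_mul_add hr hd0,
      subst_opow_mul_add hfE (by simp [hc0]) (isPrincipal_add_omega0 hc hd) ht hu.1 hv.2,
      subst_opow_mul_add hfE hd0 hd ht hv.1 hv.2, opow_mul_add_add_opow_mul_add hsr hd0]
  · have hrv := isPrincipal_add_omega0_opow a hr (opow_mul_add_lt_opow hd ht hab)
    have hrvS := (Ep_add_subset r _).trans (union_subset hu.2 hv)
    rw [add_assoc, subst_opow_mul_add hfE hc0 hc hrv hu.1 hrvS,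
      ih r (lt_opow_mul_add hc0 hr) hu.2, add_assoc]

theorem subst_mul (hfE : ∀ e ∈ S, IsEpsilon (f e)) (hf : StrictMonoOn f S) {x y : Ordinal.{0}}
    (hx : Ep x ⊆ S) (hy : Ep y ⊆ S) : subst f (x * y) = subst f x * subst f y := by
  induction y using WellFoundedLT.induction with
  | _ y ih =>
  rcases eq_or_ne x 0 with rfl | hx0
  · rw [zero_mul, subst_zero, zero_mul]
  rcases eq_or_ne y 0 with rfl | hy0
  · rw [mul_zero, subst_zero, mul_zero]
  obtain ⟨a, c, r, hc0, hc, hr, rfl⟩ := exists_eq_opow_mul_add hx0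
  obtain ⟨haS, hrS⟩ : Ep a ⊆ S ∧ Ep r ⊆ S := by
    rwa [Ep_opow_mul_add hc0 hc hr, union_subset_iff] at hx
  have hsr := subst_lt_opow_subst hfE hf hr haS hrS
  have hsx := subst_opow_mul_add hfE hc0 hc hr haS hrS
  rcases lt_or_ge y ω with hyω | hωy
  · rw [opow_mul_add_mul_of_lt_omega0 hr hc0 hy0 hyω,
      subst_opow_mul_add hfE (mul_ne_zero hc0 hy0) (isPrincipal_mul_omega0 hc hyω) hr haS hrS,
      hsx, subst_of_lt_omega0 f hyω, opow_mul_add_mul_of_lt_omega0 hsr hc0 hy0 hyω]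
  obtain ⟨b, d, t, hd0, hd, ht, rfl⟩ := exists_eq_opow_mul_add hy0
  have hb0 : b ≠ 0 := by
    rintro rfl
    exact hωy.not_gt (by simpa using opow_mul_add_lt_opow hd ht zero_lt_one)
  rw [Ep_opow_mul_add hd0 hd ht, union_subset_iff] at hy
  have hsb0 := (subst_pos hfE hb0 hy.1).ne'
  have habS := (Ep_add_subset a b).trans (union_subset haS hy.1)
  have hxtS := (Ep_mul_subset _ t).trans (union_subset hx hy.2)
  rw [opow_mul_add_mul_opow_mul_add hr hc0 hc hb0,
    subst_opow_mul_add hfE hd0 hd (opow_mul_add_mul_lt_opow_add hr hc0 hc hb0 ht) habS hxtS,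
    subst_add hfE hf haS hy.1, ih t (lt_opow_mul_add hd0 ht) hy.2,
    subst_opow_mul_add hfE hd0 hd ht hy.1 hy.2, hsx,
    opow_mul_add_mul_opow_mul_add hsr hc0 hc hsb0]

end Substitution

theorem stmt10_general (S : Set Ordinal.{0}) (f : Ordinal → Ordinal)
    (hfE : ∀ e ∈ S, IsEpsilon (f e))
    (hf : StrictMonoOn f S)
    (x y : Ordinal) (hx : Ep x ⊆ S) (hy : Ep y ⊆ S) :
    Ep (x * y) ⊆ S ∧ subst f (x * y) = subst f x * subst f y :=
  ⟨(Ep_mul_subset x y).trans (union_subset hx hy), subst_mul hfE hf hx hy⟩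

theorem stmt10 (S : Set Ordinal.{0}) (f : Ordinal → Ordinal)
    (hS : ∀ e ∈ S, IsEpsilon e) (hfE : ∀ e ∈ S, IsEpsilon (f e))
    (hf : StrictMonoOn f S)
    (x y : Ordinal) (hx : Ep x ⊆ S) (hy : Ep y ⊆ S) :
    Ep (x * y) ⊆ S ∧ subst f (x * y) = subst f x * subst f y :=
  stmt10_general S f hfE hf x y hx hy
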